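/- Let A = A₁A₂ = A₂A₁ with A Hermitian. Then A, A₁A₁*, and A₂*A₂ pairwise commute (form a commuting family of Hermitian matrices). -/
import Mathlib


open Matrix
open scoped ComplexOrder

/-- The spectral norm (operator 2-norm) of a complex matrix. -/
noncomputable def specNorm {m n : Type*} [Fintype m] [Fintype n] [DecidableEq n]
    (A : Matrix m n ℂ) : ℝ :=
  ‖LinearMap.toContinuousLinearMap (Matrix.toEuclideanLin A)‖

/-- `B` is the Moore–Penrose pseudoinverse of `A` (the four Penrose conditions). -/
def IsMP {m n : Type*} [Fintype m] [Fintype n]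
    (A : Matrix m n ℂ) (B : Matrix n m ℂ) : Prop :=
  A * B * A = A ∧ B * A * B = B ∧ (A * B)ᴴ = A * B ∧ (B * A)ᴴ = B * A

/-- If `A` is Hermitian and `A = A₁A₂ = A₂A₁`, then `A`, `A₁A₁ᴴ` and
`A₂ᴴA₂` pairwise commute. -/
theorem stmt6 (n : ℕ) (A A₁ A₂ : Matrix (Fin n) (Fin n) ℂ)
    (hA : A.IsHermitian) (hfac : A = A₁ * A₂) (hfac' : A₁ * A₂ = A₂ * A₁) :
    A * (A₁ * A₁ᴴ) = (A₁ * A₁ᴴ) * A ∧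
    A * (A₂ᴴ * A₂) = (A₂ᴴ * A₂) * A ∧
    (A₁ * A₁ᴴ) * (A₂ᴴ * A₂) = (A₂ᴴ * A₂) * (A₁ * A₁ᴴ) := by
  have hAH : Aᴴ = A := hA
  -- A₁ commutes with A
  have h1 : A₁ * A = A * A₁ := by
    calc A₁ * A = A₁ * (A₂ * A₁) := by rw [hfac, hfac']
    _ = (A₁ * A₂) * A₁ := by rw [mul_assoc]
    _ = A * A₁ := by rw [← hfac]
  -- A₂ commutes with A
  have h2 : A₂ * A = A * A₂ := by
    calc A₂ * A = A₂ * (A₁ * A₂) := by rw [hfac]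
    _ = (A₂ * A₁) * A₂ := by rw [mul_assoc]
    _ = A * A₂ := by rw [← hfac', ← hfac]
  -- adjoint versions
  have h1h : A₁ᴴ * A = A * A₁ᴴ := by
    have := congrArg conjTranspose h1
    simpa [conjTranspose_mul, hAH] using this.symm
  have h2h : A₂ᴴ * A = A * A₂ᴴ := by
    have := congrArg conjTranspose h2
    simpa [conjTranspose_mul, hAH] using this.symm
  -- key adjoint factorizations
  have hk1 : A₁ᴴ * A₂ᴴ = A := by
    rw [← conjTranspose_mul, ← hfac', ← hfac, hAH]
  have hk2 : A₂ᴴ * A₁ᴴ = A := by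
    have := congrArg conjTranspose hfac
    rw [conjTranspose_mul, hAH] at this
    exact this.symm
  refine ⟨?_, ?_, ?_⟩
  · calc A * (A₁ * A₁ᴴ) = (A * A₁) * A₁ᴴ := by rw [mul_assoc]
    _ = A₁ * (A * A₁ᴴ) := by rw [← h1, mul_assoc]
    _ = A₁ * (A₁ᴴ * A) := by rw [h1h]
    _ = (A₁ * A₁ᴴ) * A := by rw [mul_assoc]
  · calc A * (A₂ᴴ * A₂) = (A * A₂ᴴ) * A₂ := by rw [mul_assoc]
    _ = A₂ᴴ * (A * A₂) := by rw [← h2h, mul_assoc]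
    _ = A₂ᴴ * (A₂ * A) := by rw [h2]
    _ = (A₂ᴴ * A₂) * A := by rw [mul_assoc]
  · calc (A₁ * A₁ᴴ) * (A₂ᴴ * A₂) = A₁ * (A₁ᴴ * A₂ᴴ) * A₂ := by simp only [mul_assoc]
    _ = A₁ * A * A₂ := by rw [hk1]
    _ = A * (A₁ * A₂) := by rw [h1, mul_assoc]
    _ = A * A := by rw [← hfac]
    _ = A₂ᴴ * A₁ᴴ * A := by rw [hk2]
    _ = A₂ᴴ * (A * A₁ᴴ) := by rw [mul_assoc, h1h]
    _ = A₂ᴴ * (A₂ * A₁ * A₁ᴴ) := by rw [← hfac', ← hfac]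
    _ = (A₂ᴴ * A₂) * (A₁ * A₁ᴴ) := by simp only [mul_assoc]
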